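/- arXiv:2002.00879 — 3 statements merged into one kernel-verified Lean document; each statement's English description precedes it below -/
import Mathlib

section
/- Let n ≥ 1. If A is an n×n complex Hermitian matrix with γ₀(A) = 0, then A = 0. Moreover, for all n×n complex Hermitian matrices A and B, |γ₀(A) − γ₀(B)| ≤ 2·‖A − B‖₁,₁. -/
open Matrix ComplexOrder

/-- The ℓ¹ norm of a vector in ℂⁿ. -/
noncomputable def l1n {n : ℕ} (x : Fin n → ℂ) : ℝ := ∑ i, ‖x i‖

/-- The entrywise ℓ¹ norm ‖A‖₁,₁ of a matrix. -/
noncomputable def norm11 {n : ℕ} (A : Matrix (Fin n) (Fin n) ℂ) : ℝ :=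
  ∑ i, ∑ j, ‖A i j‖

/-- The Frobenius norm of a matrix. -/
noncomputable def frobNorm {n : ℕ} (A : Matrix (Fin n) (Fin n) ℂ) : ℝ :=
  Real.sqrt (∑ i, ∑ j, ‖A i j‖ ^ 2)

/-- γ₊(A): infimum of Σ ‖g_k‖₁² over finite decompositions A = Σ g_k g_k*. -/
noncomputable def gammaPlus {n : ℕ} (A : Matrix (Fin n) (Fin n) ℂ) : ℝ :=
  sInf {r : ℝ | ∃ (m : ℕ) (g : Fin m → Fin n → ℂ),
    A = ∑ k, vecMulVec (g k) (star (g k)) ∧ r = ∑ k, (l1n (g k)) ^ 2}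

/-- γ(A): infimum of Σ ‖g_k‖₁‖h_k‖₁ over finite decompositions A = Σ g_k h_k*. -/
noncomputable def gammaCross {n : ℕ} (A : Matrix (Fin n) (Fin n) ℂ) : ℝ :=
  sInf {r : ℝ | ∃ (m : ℕ) (g h : Fin m → Fin n → ℂ),
    A = ∑ k, vecMulVec (g k) (star (h k)) ∧ r = ∑ k, l1n (g k) * l1n (h k)}

/-- γ₀(A): infimum of γ₊(B) + γ₊(C) over decompositions A = B - C with B, C PSD. -/
noncomputable def gammaZero {n : ℕ} (A : Matrix (Fin n) (Fin n) ℂ) : ℝ :=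
  sInf {r : ℝ | ∃ B C : Matrix (Fin n) (Fin n) ℂ, B.PosSemidef ∧ C.PosSemidef ∧
    A = B - C ∧ r = gammaPlus B + gammaPlus C}

/-!
Every decomposition `B = ∑ g_k g_k*` has `‖B‖₁,₁ ≤ ∑ ‖g_k‖₁²` by the triangle inequality, so
`‖A‖₁,₁ ≤ γ₀(A)`; this gives definiteness. For the Lipschitz bound, write each entry of a
Hermitian `D` as `D_ij = c²`: with `x = (c/2) e_i` and `y = (c̄/2) e_j`, polarization gives
`(D_ij E_ij + D̄_ij E_ji) / 2 = (x + y)(x + y)* - (x - y)(x - y)*`, and both vectors have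
`ℓ¹` norm at most `|c| = √|D_ij|`. Summing over all `(i, j)` splits `D` as `P - Q` with
`γ₊(P) + γ₊(Q) ≤ 2‖D‖₁,₁`. Adding this to a decomposition of `B` and using subadditivity of `γ₊`
bounds `γ₀(A)` by `γ₀(B) + 2‖A - B‖₁,₁`.
-/

section

variable {n : ℕ}

lemma l1n_nonneg (x : Fin n → ℂ) : 0 ≤ l1n x :=
  Finset.sum_nonneg fun _ _ => norm_nonneg _

lemma l1n_add_le (x y : Fin n → ℂ) : l1n (x + y) ≤ l1n x + l1n y := by
  rw [l1n, l1n, l1n, ← Finset.sum_add_distrib]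
  exact Finset.sum_le_sum fun i _ => norm_add_le _ _

lemma l1n_sub_le (x y : Fin n → ℂ) : l1n (x - y) ≤ l1n x + l1n y := by
  rw [l1n, l1n, l1n, ← Finset.sum_add_distrib]
  exact Finset.sum_le_sum fun i _ => norm_sub_le _ _

lemma l1n_star (x : Fin n → ℂ) : l1n (star x) = l1n x := by
  simp [l1n]

lemma l1n_single (i : Fin n) (a : ℂ) : l1n (Pi.single i a) = ‖a‖ := by
  rw [l1n, Finset.sum_eq_single i (fun j _ hj => by simp [hj]) (by simp)]
  simp

lemma norm11_nonneg (A : Matrix (Fin n) (Fin n) ℂ) : 0 ≤ norm11 A :=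
  Finset.sum_nonneg fun _ _ => Finset.sum_nonneg fun _ _ => norm_nonneg _

lemma norm11_eq_zero_iff {A : Matrix (Fin n) (Fin n) ℂ} : norm11 A = 0 ↔ A = 0 := by
  simp [norm11, Finset.sum_eq_zero_iff_of_nonneg, Finset.sum_nonneg, ← Matrix.ext_iff]

lemma norm11_add_le (A B : Matrix (Fin n) (Fin n) ℂ) : norm11 (A + B) ≤ norm11 A + norm11 B := by
  simp only [norm11, ← Finset.sum_add_distrib]
  exact Finset.sum_le_sum fun i _ => Finset.sum_le_sum fun j _ => norm_add_le _ _

lemma norm11_sub_le (A B : Matrix (Fin n) (Fin n) ℂ) : norm11 (A - B) ≤ norm11 A + norm11 B := by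
  simp only [norm11, ← Finset.sum_add_distrib]
  exact Finset.sum_le_sum fun i _ => Finset.sum_le_sum fun j _ => norm_sub_le _ _

lemma norm11_sub_comm (A B : Matrix (Fin n) (Fin n) ℂ) : norm11 (A - B) = norm11 (B - A) := by
  simp only [norm11, Matrix.sub_apply, norm_sub_rev]

lemma norm11_sum_le {ι : Type*} (s : Finset ι) (A : ι → Matrix (Fin n) (Fin n) ℂ) :
    norm11 (∑ k ∈ s, A k) ≤ ∑ k ∈ s, norm11 (A k) :=
  Finset.le_sum_of_subadditive norm11 (by simp [norm11]) norm11_add_le s A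

lemma norm11_vecMulVec (x y : Fin n → ℂ) : norm11 (vecMulVec x y) = l1n x * l1n y := by
  simp [norm11, l1n, vecMulVec_apply, Finset.sum_mul_sum]

lemma gammaPlus_nonneg (A : Matrix (Fin n) (Fin n) ℂ) : 0 ≤ gammaPlus A := by
  refine Real.sInf_nonneg ?_
  rintro _ ⟨m, g, -, rfl⟩
  positivity

lemma gammaPlus_le_sum {ι : Type*} [Fintype ι] (g : ι → Fin n → ℂ) :
    gammaPlus (∑ k, vecMulVec (g k) (star (g k))) ≤ ∑ k, l1n (g k) ^ 2 := by
  refine csInf_le ⟨0, ?_⟩ ⟨_, g ∘ (Fintype.equivFin ι).symm,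
    ((Fintype.equivFin ι).symm.sum_comp _).symm, ((Fintype.equivFin ι).symm.sum_comp _).symm⟩
  rintro _ ⟨m, g, -, rfl⟩
  positivity

lemma le_gammaPlus {A : Matrix (Fin n) (Fin n) ℂ} (hA : A.PosSemidef) {c : ℝ}
    (h : ∀ (m : ℕ) (g : Fin m → Fin n → ℂ),
      A = ∑ k, vecMulVec (g k) (star (g k)) → c ≤ ∑ k, l1n (g k) ^ 2) :
    c ≤ gammaPlus A := by
  obtain ⟨m, g, hg⟩ := Matrix.posSemidef_iff_eq_sum_vecMulVec.mp hA
  refine le_csInf ⟨_, m, g, hg, rfl⟩ ?_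
  rintro _ ⟨m, g, hg, rfl⟩
  exact h m g hg

lemma norm11_le_gammaPlus {A : Matrix (Fin n) (Fin n) ℂ} (hA : A.PosSemidef) :
    norm11 A ≤ gammaPlus A := by
  refine le_gammaPlus hA fun m g hg => ?_
  calc norm11 A ≤ ∑ k, norm11 (vecMulVec (g k) (star (g k))) := hg ▸ norm11_sum_le _ _
    _ = ∑ k, l1n (g k) ^ 2 := by simp only [norm11_vecMulVec, l1n_star, sq]

lemma gammaPlus_add_le {A B : Matrix (Fin n) (Fin n) ℂ} (hA : A.PosSemidef) (hB : B.PosSemidef) :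
    gammaPlus (A + B) ≤ gammaPlus A + gammaPlus B := by
  rw [← sub_le_iff_le_add]
  refine le_gammaPlus hA fun m g hg => ?_
  rw [sub_le_comm]
  refine le_gammaPlus hB fun m' g' hg' => ?_
  rw [sub_le_iff_le_add']
  simpa [Fintype.sum_sum_type, ← hg, ← hg'] using gammaPlus_le_sum (Sum.elim g g')

lemma Matrix.IsHermitian.eq_sum_single_add_single {m : Type*} [Fintype m] [DecidableEq m]
    {D : Matrix m m ℂ} (hD : D.IsHermitian) :
    D = ∑ p : m × m,
      (single p.1 p.2 (D p.1 p.2 / 2) + single p.2 p.1 (star (D p.1 p.2) / 2)) := by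
  ext a b
  simp [Matrix.sum_apply, Matrix.single_apply, Fintype.sum_prod_type, Finset.sum_add_distrib,
    ite_and, ← hD.apply a b]

lemma vecMulVec_add_sub_vecMulVec_sub {m R : Type*} [CommRing R] [StarRing R] (x y : m → R) :
    vecMulVec (x + y) (star (x + y)) - vecMulVec (x - y) (star (x - y)) =
      2 • (vecMulVec x (star y) + vecMulVec y (star x)) := by
  ext a b
  simp only [Matrix.sub_apply, Matrix.smul_apply, Matrix.add_apply, vecMulVec_apply, Pi.add_apply,
    Pi.sub_apply, Pi.star_apply, star_add, star_sub]
  ring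

lemma vecMulVec_single_star_single {m R : Type*} [DecidableEq m] [Semiring R] [StarRing R]
    (i j : m) (a b : R) :
    vecMulVec (Pi.single i a) (star (Pi.single j b)) = single i j (a * star b) := by
  ext k l
  rcases eq_or_ne i k with rfl | hk <;> rcases eq_or_ne j l with rfl | hl <;>
    simp [vecMulVec_apply, *]

lemma single_add_single_eq_vecMulVec_sub {m : Type*} [DecidableEq m] (i j : m) (c : ℂ) :
    single i j (c * c / 2) + single j i (star (c * c) / 2) =
      vecMulVec (Pi.single i (c / 2) + Pi.single j (star c / 2))
          (star (Pi.single i (c / 2) + Pi.single j (star c / 2))) -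
        vecMulVec (Pi.single i (c / 2) - Pi.single j (star c / 2))
          (star (Pi.single i (c / 2) - Pi.single j (star c / 2))) := by
  rw [vecMulVec_add_sub_vecMulVec_sub, vecMulVec_single_star_single, vecMulVec_single_star_single,
    smul_add, smul_single, smul_single]
  congr 2 <;> simp only [nsmul_eq_mul, star_div₀, star_star, star_mul', star_ofNat] <;> ring

lemma l1n_sq_le_norm_mul_self {x : Fin n → ℂ} {c : ℂ} (h : l1n x ≤ ‖c / 2‖ + ‖star c / 2‖) :
    l1n x ^ 2 ≤ ‖c * c‖ := by
  rw [norm_mul, ← sq]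
  refine pow_le_pow_left₀ (l1n_nonneg x) (h.trans_eq ?_) 2
  simp only [norm_div, norm_star, Complex.norm_two]
  ring

lemma Matrix.IsHermitian.exists_posSemidef_sub_gammaPlus_le {D : Matrix (Fin n) (Fin n) ℂ}
    (hD : D.IsHermitian) :
    ∃ P Q : Matrix (Fin n) (Fin n) ℂ, P.PosSemidef ∧ Q.PosSemidef ∧ D = P - Q ∧
      gammaPlus P + gammaPlus Q ≤ 2 * norm11 D := by
  choose c hc using fun p : Fin n × Fin n => IsAlgClosed.exists_eq_mul_self (D p.1 p.2)
  let u : Fin n × Fin n → Fin n → ℂ := fun p ↦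
    Pi.single p.1 (c p / 2) + Pi.single p.2 (star (c p) / 2)
  let v : Fin n × Fin n → Fin n → ℂ := fun p ↦
    Pi.single p.1 (c p / 2) - Pi.single p.2 (star (c p) / 2)
  have hu p : l1n (u p) ^ 2 ≤ ‖D p.1 p.2‖ := by
    rw [hc p]
    refine l1n_sq_le_norm_mul_self ((l1n_add_le _ _).trans_eq ?_)
    rw [l1n_single, l1n_single]
  have hv p : l1n (v p) ^ 2 ≤ ‖D p.1 p.2‖ := by
    rw [hc p]
    refine l1n_sq_le_norm_mul_self ((l1n_sub_le _ _).trans_eq ?_)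
    rw [l1n_single, l1n_single]
  refine ⟨∑ p, vecMulVec (u p) (star (u p)), ∑ p, vecMulVec (v p) (star (v p)),
    posSemidef_sum _ fun p _ => posSemidef_vecMulVec_self_star _,
    posSemidef_sum _ fun p _ => posSemidef_vecMulVec_self_star _, ?_, ?_⟩
  · refine hD.eq_sum_single_add_single.trans ?_
    rw [← Finset.sum_sub_distrib]
    refine Finset.sum_congr rfl fun p _ => ?_
    rw [hc p]
    exact single_add_single_eq_vecMulVec_sub _ _ _
  · calc _ ≤ ∑ p, l1n (u p) ^ 2 + ∑ p, l1n (v p) ^ 2 :=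
          add_le_add (gammaPlus_le_sum u) (gammaPlus_le_sum v)
      _ ≤ ∑ p : Fin n × Fin n, ‖D p.1 p.2‖ + ∑ p : Fin n × Fin n, ‖D p.1 p.2‖ :=
          add_le_add (Finset.sum_le_sum fun p _ => hu p) (Finset.sum_le_sum fun p _ => hv p)
      _ = 2 * norm11 D := by rw [norm11, ← Fintype.sum_prod_type']; ring

lemma gammaZero_le {B C : Matrix (Fin n) (Fin n) ℂ} (hB : B.PosSemidef) (hC : C.PosSemidef) :
    gammaZero (B - C) ≤ gammaPlus B + gammaPlus C := by
  refine csInf_le ⟨0, ?_⟩ ⟨B, C, hB, hC, rfl, rfl⟩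
  rintro _ ⟨B, C, -, -, -, rfl⟩
  exact add_nonneg (gammaPlus_nonneg B) (gammaPlus_nonneg C)

lemma le_gammaZero {A : Matrix (Fin n) (Fin n) ℂ} (hA : A.IsHermitian) {c : ℝ}
    (h : ∀ B C : Matrix (Fin n) (Fin n) ℂ, B.PosSemidef → C.PosSemidef → A = B - C →
      c ≤ gammaPlus B + gammaPlus C) :
    c ≤ gammaZero A := by
  obtain ⟨P, Q, hP, hQ, hPQ, -⟩ := hA.exists_posSemidef_sub_gammaPlus_le
  refine le_csInf ⟨_, P, Q, hP, hQ, hPQ, rfl⟩ ?_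
  rintro _ ⟨B, C, hB, hC, hBC, rfl⟩
  exact h B C hB hC hBC

lemma norm11_le_gammaZero {A : Matrix (Fin n) (Fin n) ℂ} (hA : A.IsHermitian) :
    norm11 A ≤ gammaZero A := by
  refine le_gammaZero hA fun B C hB hC hBC => ?_
  calc norm11 A ≤ norm11 B + norm11 C := hBC ▸ norm11_sub_le B C
    _ ≤ gammaPlus B + gammaPlus C := add_le_add (norm11_le_gammaPlus hB) (norm11_le_gammaPlus hC)

lemma gammaZero_le_add {A B : Matrix (Fin n) (Fin n) ℂ} (hA : A.IsHermitian) (hB : B.IsHermitian) :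
    gammaZero A ≤ gammaZero B + 2 * norm11 (A - B) := by
  obtain ⟨P, Q, hP, hQ, hPQ, hcost⟩ := (hA.sub hB).exists_posSemidef_sub_gammaPlus_le
  rw [← sub_le_iff_le_add]
  refine le_gammaZero hB fun Bp Bm hBp hBm hB' => ?_
  have hA' : A = (Bp + P) - (Bm + Q) := by rw [← sub_add_cancel A B, hPQ, hB']; abel
  have hsum := hA' ▸ gammaZero_le (hBp.add hP) (hBm.add hQ)
  linarith [gammaPlus_add_le hBp hP, gammaPlus_add_le hBm hQ]

end

theorem stmt6_general (n : ℕ) :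
    (∀ A : Matrix (Fin n) (Fin n) ℂ, A.IsHermitian → gammaZero A = 0 → A = 0) ∧
    (∀ A B : Matrix (Fin n) (Fin n) ℂ, A.IsHermitian → B.IsHermitian →
      |gammaZero A - gammaZero B| ≤ 2 * norm11 (A - B)) := by
  refine ⟨fun A hA h0 => ?_, fun A B hA hB => abs_sub_le_iff.2 ⟨?_, ?_⟩⟩
  · exact norm11_eq_zero_iff.1 (le_antisymm (h0 ▸ norm11_le_gammaZero hA) (norm11_nonneg A))
  · linarith [gammaZero_le_add hA hB]
  · linarith [gammaZero_le_add hB hA, norm11_sub_comm A B]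

theorem stmt6 (n : ℕ) (hn : 1 ≤ n) :
    (∀ A : Matrix (Fin n) (Fin n) ℂ, A.IsHermitian → gammaZero A = 0 → A = 0) ∧
    (∀ A B : Matrix (Fin n) (Fin n) ℂ, A.IsHermitian → B.IsHermitian →
      |gammaZero A - gammaZero B| ≤ 2 * norm11 (A - B)) :=
  stmt6_general n
end

section
/- Let n ≥ 1 and let T be an n×n complex positive semidefinite Hermitian matrix. Then the infimum defining γ₊(T) is attained by a decomposition with at most n² + 1 rank-one terms: there exist vectors g₁, …, g_{n²+1} ∈ ℂⁿ such that T = Σ_{k=1}^{n²+1} g_k g_k* and Σ_{k=1}^{n²+1} ‖g_k‖₁² = γ₊(T). -/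
open Matrix ComplexOrder

/-!
The points `(g g*, ‖g‖₁²)` lie in the real vector space of Hermitian matrices times `ℝ`, which has
dimension `n² + 1`, and they form a cone (scaling `g` by `√c` scales the point by `c`). By
Carathéodory's theorem for cones, any decomposition `T = ∑ g_k g_k*` can therefore be replaced by
one with `n² + 1` terms and the same cost. Decompositions with `n² + 1` terms form a compact set,
since `|g_k i|² ≤ T_ii`, so the continuous cost attains a minimum on it, and that minimum is
`γ₊(T)`.
-/

section ConicCaratheodory

variable {𝕜 E : Type*} [Field 𝕜] [LinearOrder 𝕜] [IsStrictOrderedRing 𝕜]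
  [AddCommGroup E] [Module 𝕜 E] {S : Set E}

lemma exists_pos_coeff_of_not_linearIndependent {ι : Type*} [Fintype ι] {v : ι → E}
    (hv : ¬ LinearIndependent 𝕜 v) : ∃ c : ι → 𝕜, ∑ i, c i • v i = 0 ∧ ∃ i, 0 < c i := by
  obtain ⟨c, hc, i, hci⟩ := Fintype.not_linearIndependent_iff.mp hv
  rcases hci.lt_or_gt with hneg | hpos
  · exact ⟨-c, by simp [Finset.sum_neg_distrib, hc], i, by simpa using hneg⟩
  · exact ⟨c, hc, i, hpos⟩

/-- Subtracting `(c k / c k₀) • v k` from each term, with `c k₀` the largest coefficient of a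
linear relation, keeps every term in the cone and kills the `k₀`-th one. -/
lemma exists_fin_sum_eq_of_not_linearIndependent (hS : ∀ c : 𝕜, 0 ≤ c → ∀ s ∈ S, c • s ∈ S)
    {m : ℕ} {v : Fin (m + 1) → E} (hv : ∀ k, v k ∈ S) (hdep : ¬ LinearIndependent 𝕜 v) :
    ∃ w : Fin m → E, (∀ k, w k ∈ S) ∧ ∑ k, w k = ∑ k, v k := by
  obtain ⟨c, hc, i, hci⟩ := exists_pos_coeff_of_not_linearIndependent hdep
  obtain ⟨k₀, -, hk₀⟩ := Finset.exists_max_image Finset.univ c ⟨i, Finset.mem_univ i⟩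
  have hck₀ : 0 < c k₀ := hci.trans_le (hk₀ i (Finset.mem_univ i))
  set w : Fin (m + 1) → E := fun k => (1 - c k / c k₀) • v k
  have hwS (k) : w k ∈ S :=
    hS _ (sub_nonneg.mpr ((div_le_one hck₀).mpr (hk₀ k (Finset.mem_univ k)))) _ (hv k)
  have hw_sum : ∑ k, w k = ∑ k, v k := by
    have : ∑ k, (c k / c k₀) • v k = 0 := by
      simp only [div_eq_inv_mul, ← smul_smul, ← Finset.smul_sum, hc, smul_zero]
    simp only [w, sub_smul, one_smul, Finset.sum_sub_distrib, this, sub_zero]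
  have hwk₀ : w k₀ = 0 := by simp [w, div_self hck₀.ne']
  refine ⟨fun k => w (k₀.succAbove k), fun k => hwS _, ?_⟩
  rw [← hw_sum, Fin.sum_univ_succAbove w k₀, hwk₀, zero_add]

lemma exists_fin_sum_eq_of_le (h0 : (0 : E) ∈ S) {m d : ℕ} (hmd : m ≤ d) {v : Fin m → E}
    (hv : ∀ k, v k ∈ S) : ∃ w : Fin d → E, (∀ k, w k ∈ S) ∧ ∑ k, w k = ∑ k, v k := by
  have hinj := Fin.castLE_injective hmd
  refine ⟨Function.extend (Fin.castLE hmd) v 0, fun k => ?_, ?_⟩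
  · by_cases hk : ∃ j, Fin.castLE hmd j = k
    · obtain ⟨j, rfl⟩ := hk
      rw [hinj.extend_apply]
      exact hv j
    · rw [Function.extend_apply' _ _ _ hk]
      exact h0
  · refine (Fintype.sum_of_injective _ hinj _ _ (fun k hk => ?_) fun j => ?_).symm
    · exact Function.extend_apply' (f := Fin.castLE hmd) v 0 k hk
    · exact (hinj.extend_apply v 0 j).symm

/-- Carathéodory's theorem for cones. -/
theorem exists_fin_sum_eq_of_finrank_le [Module.Finite 𝕜 E] (h0 : (0 : E) ∈ S)
    (hS : ∀ c : 𝕜, 0 ≤ c → ∀ s ∈ S, c • s ∈ S) {d : ℕ} (hd : Module.finrank 𝕜 E ≤ d) :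
    ∀ {m : ℕ} {v : Fin m → E}, (∀ k, v k ∈ S) →
      ∃ w : Fin d → E, (∀ k, w k ∈ S) ∧ ∑ k, w k = ∑ k, v k := by
  intro m
  induction m with
  | zero => exact fun hv => exists_fin_sum_eq_of_le h0 (Nat.zero_le d) hv
  | succ m ih =>
    intro v hv
    by_cases hmd : m + 1 ≤ d
    · exact exists_fin_sum_eq_of_le h0 hmd hv
    · have hdep : ¬ LinearIndependent 𝕜 v := fun hind => by
        have := hind.fintype_card_le_finrank
        rw [Fintype.card_fin] at this
        omega
      obtain ⟨w, hwS, hw⟩ := exists_fin_sum_eq_of_not_linearIndependent hS hv hdep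
      obtain ⟨u, huS, hu⟩ := ih hwS
      exact ⟨u, huS, hu.trans hw⟩

end ConicCaratheodory

section SelfAdjoint

open Complex

instance selfAdjoint.instModuleFiniteReal {A : Type*} [AddCommGroup A] [Module ℂ A]
    [StarAddMonoid A] [StarModule ℂ A] [Module.Finite ℝ A] : Module.Finite ℝ (selfAdjoint A) :=
  .of_surjective _ realPart_surjective

/-- Multiplication by `I` identifies the self-adjoint and skew-adjoint parts. -/
lemma finrank_real_eq_two_mul_finrank_selfAdjoint (A : Type*) [AddCommGroup A] [Module ℂ A]
    [StarAddMonoid A] [StarModule ℂ A] [Module.Finite ℝ A] :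
    Module.finrank ℝ A = 2 * Module.finrank ℝ (selfAdjoint A) := by
  have hbij : Function.Bijective (skewAdjoint.negISMul (A := A)) := by
    refine ⟨fun a b hab => ?_, fun a => ⟨⟨I • (a : A), by simp⟩, ?_⟩⟩
    · ext; simpa using congrArg Subtype.val hab
    · ext; simp [smul_smul]
  let e := LinearEquiv.ofBijective _ hbij
  have : Module.Finite ℝ (skewAdjoint A) := .equiv e.symm
  have := (StarModule.decomposeProdAdjoint ℝ A).finrank_eq
  rw [Module.finrank_prod, e.finrank_eq] at this
  omega

lemma finrank_selfAdjoint_matrix (ι : Type*) [Fintype ι] :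
    Module.finrank ℝ (selfAdjoint (Matrix ι ι ℂ)) = Fintype.card ι ^ 2 := by
  have := finrank_real_eq_two_mul_finrank_selfAdjoint (Matrix ι ι ℂ)
  rw [Module.finrank_matrix, Complex.finrank_real_complex] at this
  linarith

end SelfAdjoint

section GramDecomposition

variable {n : ℕ}

lemma l1n_smul (c : ℂ) (g : Fin n → ℂ) : l1n (c • g) = ‖c‖ * l1n g := by
  simp [l1n, Finset.mul_sum]

noncomputable def gramPoint (g : Fin n → ℂ) : selfAdjoint (Matrix (Fin n) (Fin n) ℂ) × ℝ :=
  (⟨vecMulVec g (star g), (posSemidef_vecMulVec_self_star g).isHermitian⟩, l1n g ^ 2)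

lemma gramPoint_zero : gramPoint (0 : Fin n → ℂ) = 0 := by
  ext <;> simp [gramPoint, l1n]

lemma smul_gramPoint {c : ℝ} (hc : 0 ≤ c) (g : Fin n → ℂ) :
    c • gramPoint g = gramPoint ((√c : ℂ) • g) := by
  have hsq : (√c : ℂ) * (√c : ℂ) = c := by rw [← Complex.ofReal_mul, Real.mul_self_sqrt hc]
  ext i j
  · simp [gramPoint, vecMulVec_apply, ← mul_assoc, hsq]
  · simp only [gramPoint, Prod.smul_snd, smul_eq_mul]
    rw [l1n_smul, Complex.norm_real, Real.norm_of_nonneg (Real.sqrt_nonneg c), mul_pow,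
      Real.sq_sqrt hc]

theorem exists_gram_decomposition_fin_sq_add_one {m : ℕ} (g : Fin m → Fin n → ℂ) :
    ∃ g' : Fin (n ^ 2 + 1) → Fin n → ℂ,
      ∑ k, vecMulVec (g' k) (star (g' k)) = ∑ k, vecMulVec (g k) (star (g k)) ∧
      ∑ k, l1n (g' k) ^ 2 = ∑ k, l1n (g k) ^ 2 := by
  have h0 : 0 ∈ Set.range (gramPoint (n := n)) := ⟨0, gramPoint_zero⟩
  have hS (c : ℝ) (hc : 0 ≤ c) : ∀ p ∈ Set.range (gramPoint (n := n)),
      c • p ∈ Set.range gramPoint := by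
    rintro _ ⟨g, rfl⟩
    exact ⟨_, (smul_gramPoint hc g).symm⟩
  have hd : Module.finrank ℝ (selfAdjoint (Matrix (Fin n) (Fin n) ℂ) × ℝ) ≤ n ^ 2 + 1 := by
    rw [Module.finrank_prod, finrank_selfAdjoint_matrix, Module.finrank_self, Fintype.card_fin]
  obtain ⟨w, hwS, hw⟩ := exists_fin_sum_eq_of_finrank_le h0 hS hd
    (v := fun k => gramPoint (g k)) fun k => ⟨g k, rfl⟩
  choose g' hg' using hwS
  have h : ∑ k, gramPoint (g' k) = ∑ k, gramPoint (g k) := by simpa [hg'] using hw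
  refine ⟨g', ?_, ?_⟩
  · simpa [gramPoint, Prod.fst_sum] using congrArg (fun p => (p.1 : Matrix (Fin n) (Fin n) ℂ)) h
  · simpa [gramPoint, Prod.snd_sum] using congrArg Prod.snd h

end GramDecomposition

section Compactness

variable {ι κ : Type*} [Fintype ι]

lemma norm_sq_le_norm_diag_of_eq_sum_vecMulVec {T : Matrix κ κ ℂ} {g : ι → κ → ℂ}
    (hT : T = ∑ k, vecMulVec (g k) (star (g k))) (k : ι) (i : κ) : ‖g k i‖ ^ 2 ≤ ‖T i i‖ := by
  have hdiag : T i i = ((∑ k, ‖g k i‖ ^ 2 : ℝ) : ℂ) := by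
    simp [hT, Matrix.sum_apply, vecMulVec_apply, Complex.mul_conj']
  rw [hdiag, Complex.norm_of_nonneg (by positivity)]
  exact Finset.single_le_sum (f := fun k => ‖g k i‖ ^ 2) (fun _ _ => by positivity)
    (Finset.mem_univ k)

lemma isCompact_setOf_eq_sum_vecMulVec [Fintype κ] (T : Matrix κ κ ℂ) :
    IsCompact {g : ι → κ → ℂ | T = ∑ k, vecMulVec (g k) (star (g k))} := by
  refine Metric.isCompact_of_isClosed_isBounded
    (isClosed_eq continuous_const (by fun_prop)) ?_
  refine isBounded_iff_forall_norm_le.mpr ⟨√(∑ i, ‖T i i‖), fun g hg => ?_⟩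
  refine pi_norm_le_iff_of_nonneg (by positivity) |>.mpr fun k =>
    pi_norm_le_iff_of_nonneg (by positivity) |>.mpr fun i => Real.le_sqrt_of_sq_le ?_
  exact (norm_sq_le_norm_diag_of_eq_sum_vecMulVec hg k i).trans
    (Finset.single_le_sum (f := fun i => ‖T i i‖) (fun _ _ => norm_nonneg _) (Finset.mem_univ i))

end Compactness

lemma continuous_sum_l1n_sq (m n : ℕ) :
    Continuous fun g : Fin m → Fin n → ℂ => ∑ k, l1n (g k) ^ 2 := by
  unfold l1n
  fun_prop

theorem stmt8_general (n : ℕ) (T : Matrix (Fin n) (Fin n) ℂ) (hT : T.PosSemidef) :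
    ∃ g : Fin (n ^ 2 + 1) → Fin n → ℂ,
      T = ∑ k, vecMulVec (g k) (star (g k)) ∧
      ∑ k, (l1n (g k)) ^ 2 = gammaPlus T := by
  obtain ⟨m, g₀, hg₀⟩ := Matrix.posSemidef_iff_eq_sum_vecMulVec.mp hT
  obtain ⟨g₁, hg₁, -⟩ := exists_gram_decomposition_fin_sq_add_one g₀
  obtain ⟨g, hg, hmin⟩ := (isCompact_setOf_eq_sum_vecMulVec T).exists_isMinOn
    ⟨g₁, hg₀.trans hg₁.symm⟩ (continuous_sum_l1n_sq _ n).continuousOn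
  refine ⟨g, hg, ?_⟩
  rw [gammaPlus]
  refine Eq.symm (IsLeast.csInf_eq ⟨⟨_, g, hg, rfl⟩, ?_⟩)
  rintro _ ⟨m, h, hh, rfl⟩
  obtain ⟨h', hh', hcost⟩ := exists_gram_decomposition_fin_sq_add_one h
  exact hcost ▸ hmin (hh.trans hh'.symm)

theorem stmt8 (n : ℕ) (hn : 1 ≤ n) (T : Matrix (Fin n) (Fin n) ℂ) (hT : T.PosSemidef) :
    ∃ g : Fin (n ^ 2 + 1) → Fin n → ℂ,
      T = ∑ k, vecMulVec (g k) (star (g k)) ∧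
      ∑ k, (l1n (g k)) ^ 2 = gammaPlus T :=
  stmt8_general n T hT
end

section
/- Every 2×2 complex positive semidefinite Hermitian matrix A satisfies γ₊(A) = ‖A‖₁,₁. -/
open Matrix ComplexOrder

/-!
A decomposition `A = ∑ₖ gₖ gₖ*` costs at least `‖A‖₁,₁`: the rank-one term `g g*` has
`‖g g*‖₁,₁ = ‖g‖₁²`, and `‖·‖₁,₁` is subadditive. For a PSD matrix `[[a, b], [b̄, c]]` the columns
`(√a, b̄/√a)` and `(0, √(c - |b|²/a))` of its Cholesky factor attain this bound: only the first
contributes to the off-diagonal entries, and both contribute nonnegatively to the diagonal.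
-/

theorem norm11_sum_le_s18 {n m : ℕ} (M : Fin m → Matrix (Fin n) (Fin n) ℂ) :
    norm11 (∑ k, M k) ≤ ∑ k, norm11 (M k) := by
  calc norm11 (∑ k, M k) ≤ ∑ i : Fin n, ∑ j : Fin n, ∑ k, ‖M k i j‖ := by
        unfold norm11
        gcongr with i _ j _
        rw [Matrix.sum_apply]
        exact norm_sum_le _ _
    _ = ∑ k, norm11 (M k) := by
        unfold norm11
        exact (Finset.sum_congr rfl fun i _ => Finset.sum_comm).trans Finset.sum_comm

theorem norm11_vecMulVec_star_self {n : ℕ} (x : Fin n → ℂ) :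
    norm11 (vecMulVec x (star x)) = l1n x ^ 2 := by
  simp [norm11, l1n, vecMulVec_apply, sq, Finset.sum_mul_sum]

theorem norm11_le_of_eq_sum_vecMulVec {n m : ℕ} {A : Matrix (Fin n) (Fin n) ℂ}
    {g : Fin m → Fin n → ℂ} (hA : A = ∑ k, vecMulVec (g k) (star (g k))) :
    norm11 A ≤ ∑ k, l1n (g k) ^ 2 := by
  simpa only [hA, norm11_vecMulVec_star_self] using
    norm11_sum_le_s18 fun k => vecMulVec (g k) (star (g k))

theorem gammaPlus_eq_norm11_of_eq_sum_vecMulVec {n m : ℕ} {A : Matrix (Fin n) (Fin n) ℂ}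
    (g : Fin m → Fin n → ℂ) (hA : A = ∑ k, vecMulVec (g k) (star (g k)))
    (hcost : ∑ k, l1n (g k) ^ 2 = norm11 A) :
    gammaPlus A = norm11 A := by
  have hlb : norm11 A ∈ lowerBounds {r : ℝ | ∃ (m : ℕ) (g : Fin m → Fin n → ℂ),
      A = ∑ k, vecMulVec (g k) (star (g k)) ∧ r = ∑ k, l1n (g k) ^ 2} := by
    rintro r ⟨m, g, hA, rfl⟩
    exact norm11_le_of_eq_sum_vecMulVec hA
  exact IsLeast.csInf_eq ⟨⟨m, g, hA, hcost.symm⟩, hlb⟩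

theorem Matrix.PosSemidef.exists_eq_fin_two {A : Matrix (Fin 2) (Fin 2) ℂ} (hA : A.PosSemidef) :
    ∃ (a c : ℝ) (b : ℂ), 0 ≤ a ∧ 0 ≤ c ∧ ‖b‖ ^ 2 ≤ a * c ∧
      A = !![(a : ℂ), b; star b, (c : ℂ)] := by
  obtain ⟨a, ha, ha'⟩ := RCLike.nonneg_iff_exists_ofReal.mp (hA.diag_nonneg (i := 0))
  obtain ⟨c, hc, hc'⟩ := RCLike.nonneg_iff_exists_ofReal.mp (hA.diag_nonneg (i := 1))
  have hA' : A = !![(a : ℂ), A 0 1; star (A 0 1), (c : ℂ)] := by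
    rw [hA.isHermitian.apply 1 0]
    exact (eta_fin_two A).trans (by rw [← ha', ← hc']; rfl)
  refine ⟨a, c, A 0 1, ha, hc, ?_, hA'⟩
  have hdet := hA.det_nonneg
  rw [hA', det_fin_two_of, Complex.star_def, Complex.mul_conj', sub_nonneg] at hdet
  exact_mod_cast hdet

theorem exists_sqrt_mul_eq_of_norm_sq_le {a c : ℝ} {b : ℂ} (ha : 0 ≤ a) (hc : 0 ≤ c)
    (hb : ‖b‖ ^ 2 ≤ a * c) : ∃ u : ℂ, (√a : ℂ) * u = b ∧ ‖u‖ ^ 2 ≤ c := by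
  refine ⟨b / √a, ?_, ?_⟩
  · rcases ha.eq_or_lt with rfl | ha
    · have : b = 0 := by simpa using hb
      simp [this]
    · exact mul_div_cancel₀ _ (Complex.ofReal_ne_zero.2 (Real.sqrt_pos.2 ha).ne')
  · rw [norm_div, Complex.norm_real, Real.norm_of_nonneg (Real.sqrt_nonneg a), div_pow,
      Real.sq_sqrt ha]
    exact div_le_of_le_mul₀ ha hc (by linarith)

theorem exists_sum_vecMulVec_fin_two {a c : ℝ} {b : ℂ} (ha : 0 ≤ a) (hc : 0 ≤ c)
    (hb : ‖b‖ ^ 2 ≤ a * c) :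
    ∃ g : Fin 2 → Fin 2 → ℂ, !![(a : ℂ), b; star b, (c : ℂ)] =
      ∑ k, vecMulVec (g k) (star (g k)) ∧ ∑ k, l1n (g k) ^ 2 = a + 2 * ‖b‖ + c := by
  obtain ⟨u, rfl, hu⟩ := exists_sqrt_mul_eq_of_norm_sq_le ha hc hb
  have hss : √a * √a = a := Real.mul_self_sqrt ha
  have hr : √(c - ‖u‖ ^ 2) * √(c - ‖u‖ ^ 2) = c - ‖u‖ ^ 2 :=
    Real.mul_self_sqrt (sub_nonneg.2 hu)
  refine ⟨![![(√a : ℂ), star u], ![0, (√(c - ‖u‖ ^ 2) : ℂ)]], ?_, ?_⟩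
  · ext i j
    rw [Matrix.sum_apply, Fin.sum_univ_two]
    simp only [vecMulVec_apply]
    fin_cases i <;> fin_cases j <;> simp
    · exact_mod_cast hss.symm
    · exact mul_comm _ _
    · rw [Complex.conj_mul', ← Complex.ofReal_mul, hr]
      push_cast
      ring
  · have h0 : l1n ![(√a : ℂ), star u] = √a + ‖u‖ := by simp [l1n, Real.sqrt_nonneg]
    have h1 : l1n ![0, (√(c - ‖u‖ ^ 2) : ℂ)] = √(c - ‖u‖ ^ 2) := by
      simp [l1n, Real.sqrt_nonneg]
    rw [Fin.sum_univ_two, cons_val_zero, cons_val_one, cons_val_zero, h0, h1, norm_mul,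
      Complex.norm_real, Real.norm_of_nonneg (Real.sqrt_nonneg a)]
    linear_combination hss + hr

theorem stmt18 (A : Matrix (Fin 2) (Fin 2) ℂ) (hA : A.PosSemidef) :
    gammaPlus A = norm11 A := by
  obtain ⟨a, c, b, ha, hc, hb, rfl⟩ := hA.exists_eq_fin_two
  obtain ⟨g, hg, hcost⟩ := exists_sum_vecMulVec_fin_two ha hc hb
  refine gammaPlus_eq_norm11_of_eq_sum_vecMulVec g hg (hcost.trans ?_)
  simp [norm11, Fin.sum_univ_two, abs_of_nonneg ha, abs_of_nonneg hc]
  ring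
end
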